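/- Let X and Y be Hilbert spaces, T : X → Y a bounded linear operator with a least-squares projection approximation {(X_n, T_n)}. For each n define Q_n : X → X by letting Q_n x be the unique u ∈ N(T)^⊥ with Tu = P_{T(X_n)} T x (i.e., Q_n = T† P_{T(X_n)} T). Then each Q_n is a bounded linear idempotent (Q_n² = Q_n) with N(Q_n) = (T*T(X_n))^⊥ and R(Q_n) = P_{N(T)^⊥}(X_n), and the projections converge strongly: s-lim_{n→∞} P_{N(Q_n)} = P_{N(T)} and s-lim_{n→∞} P_{R(Q_n)} = P_{N(T)^⊥}. -/

import Mathlib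

/-!
`T` is injective on `N(T)ᗮ`, so `Qₙ x` is pinned down by `T (Qₙ x) = P_{T(Xₙ)} (T x)`. This makes
`Qₙ` linear and idempotent, continuous by the closed graph theorem, and identifies its kernel
(through `⟪T*T v, x⟫ = ⟪T v, T x⟫`) and its range.

For the limits: if `Kₙ ≤ L` and every point of a dense subset of `L` is a limit of points of the
`Kₙ`, then `P_{Kₙ} → P_L` strongly, since `P_{Kₙ} = P_{Kₙ} P_L`, `‖y - P_{Kₙ} y‖ ≤ ‖y - v‖` for
`v ∈ Kₙ`, and the `P_{Kₙ}` are uniformly 1-Lipschitz. This applies to `Kₙ = S(Xₙ)` whenever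
`S` is bounded with range dense in `L`; take `S = T*T` and `S = P_{N(T)ᗮ}`, both with `L = N(T)ᗮ`.
-/

open Filter Topology Metric Submodule ContinuousLinearMap

/-- Orthogonal projection onto a subspace `K` (as an operator `H →L[ℝ] H`),
defined whenever `K` admits orthogonal projections (e.g. `K` closed). -/
noncomputable def orthProj {H : Type*} [NormedAddCommGroup H] [InnerProductSpace ℝ H]
    (K : Submodule ℝ H) : H →L[ℝ] H :=
  open scoped Classical in
  if h : HasOrthogonalProjection K then
    haveI := h
    K.subtypeL.comp (orthogonalProjection K)
  else 0

theorem orthProj_eq_starProjection {H : Type*} [NormedAddCommGroup H] [InnerProductSpace ℝ H]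
    (K : Submodule ℝ H) [K.HasOrthogonalProjection] : orthProj K = K.starProjection := by
  rw [orthProj, dif_pos ‹_›]
  rfl

section StrongConvergence

variable {𝕜 E : Type*} [RCLike 𝕜] [NormedAddCommGroup E] [InnerProductSpace 𝕜 E]

theorem Submodule.norm_sub_starProjection_le (K : Submodule 𝕜 E) [K.HasOrthogonalProjection]
    (y : E) {v : E} (hv : v ∈ K) : ‖y - K.starProjection y‖ ≤ ‖y - v‖ := by
  rw [starProjection_minimal]
  exact ciInf_le ⟨0, by rintro _ ⟨w, rfl⟩; positivity⟩ (⟨v, hv⟩ : K)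

variable {K : ℕ → Submodule 𝕜 E} [∀ n, (K n).HasOrthogonalProjection]

theorem tendsto_starProjection_self_of_tendsto {y : E} {v : ℕ → E} (hv : ∀ n, v n ∈ K n)
    (hvy : Tendsto v atTop (𝓝 y)) :
    Tendsto (fun n => (K n).starProjection y) atTop (𝓝 y) := by
  rw [tendsto_iff_norm_sub_tendsto_zero] at hvy ⊢
  refine squeeze_zero (fun _ => norm_nonneg _) (fun n => ?_) hvy
  rw [norm_sub_rev, norm_sub_rev (v n)]
  exact (K n).norm_sub_starProjection_le y (hv n)

theorem isClosed_setOf_tendsto_starProjection_self :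
    IsClosed {y : E | Tendsto (fun n => (K n).starProjection y) atTop (𝓝 y)} :=
  (LipschitzWith.uniformEquicontinuous _ 1 fun n => (K n).lipschitzWith_starProjection)
    |>.equicontinuous.isClosed_setOfPred_tendsto continuous_id

theorem tendsto_starProjection_of_le_of_subset_closure {L : Submodule 𝕜 E}
    [L.HasOrthogonalProjection] {D : Set E} (hle : ∀ n, K n ≤ L) (hD : (L : Set E) ⊆ closure D)
    (happrox : ∀ y ∈ D, ∃ v : ℕ → E, (∀ n, v n ∈ K n) ∧ Tendsto v atTop (𝓝 y)) (x : E) :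
    Tendsto (fun n => (K n).starProjection x) atTop (𝓝 (L.starProjection x)) := by
  have hL : (L : Set E) ⊆ {y | Tendsto (fun n => (K n).starProjection y) atTop (𝓝 y)} := by
    refine hD.trans (closure_minimal (fun y hy => ?_) isClosed_setOf_tendsto_starProjection_self)
    obtain ⟨v, hv, hvy⟩ := happrox y hy
    exact tendsto_starProjection_self_of_tendsto hv hvy
  have hcomp : ∀ n, (K n).starProjection (L.starProjection x) = (K n).starProjection x := fun n =>
    congr($(starProjection_comp_starProjection_of_le (hle n)) x)
  simpa only [hcomp, Set.mem_ofPred_eq] using hL (L.starProjection_apply_mem x)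

theorem tendsto_starProjection_orthogonal {L : Submodule 𝕜 E} [L.HasOrthogonalProjection] {x : E}
    (h : Tendsto (fun n => (K n).starProjection x) atTop (𝓝 (Lᗮ.starProjection x))) :
    Tendsto (fun n => (K n)ᗮ.starProjection x) atTop (𝓝 (L.starProjection x)) := by
  simp_rw [starProjection_orthogonal_val,
    eq_sub_of_add_eq (L.starProjection_add_starProjection_orthogonal x)]
  exact tendsto_const_nhds.sub h

end StrongConvergence

section MinimalNormSolution

variable {𝕜 X Y : Type*} [RCLike 𝕜] [NormedAddCommGroup X] [InnerProductSpace 𝕜 X]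
  [NormedAddCommGroup Y] [InnerProductSpace 𝕜 Y] (T : X →L[𝕜] Y)

theorem ContinuousLinearMap.eq_of_mem_orthogonal_ker {u v : X}
    (hu : u ∈ (LinearMap.ker (T : X →ₗ[𝕜] Y))ᗮ) (hv : v ∈ (LinearMap.ker (T : X →ₗ[𝕜] Y))ᗮ)
    (h : T u = T v) : u = v := by
  have hker : u - v ∈ LinearMap.ker (T : X →ₗ[𝕜] Y) := by simp [h]
  have := (inf_orthogonal_eq_bot (LinearMap.ker (T : X →ₗ[𝕜] Y))).le ⟨hker, sub_mem hu hv⟩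
  rwa [Submodule.mem_bot, sub_eq_zero] at this

section LeastSquares

variable {T} {M : Submodule 𝕜 Y} [M.HasOrthogonalProjection] {f : X → X}
  (hf : ∀ x, f x ∈ (LinearMap.ker (T : X →ₗ[𝕜] Y))ᗮ ∧ T (f x) = M.starProjection (T x))
include hf

theorem apply_apply_eq_of_eq_starProjection_apply (x : X) : f (f x) = f x :=
  T.eq_of_mem_orthogonal_ker (hf _).1 (hf x).1 <| by
    rw [(hf _).2, (hf x).2, starProjection_eq_self_iff.mpr (starProjection_apply_mem _ _)]

theorem apply_eq_zero_iff_of_eq_starProjection_apply (x : X) : f x = 0 ↔ T x ∈ Mᗮ := by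
  rw [← starProjection_apply_eq_zero_iff, ← (hf x).2]
  exact ⟨fun h => by rw [h, map_zero],
    fun h => T.eq_of_mem_orthogonal_ker (hf x).1 (zero_mem _) (by rw [h, map_zero])⟩

end LeastSquares

variable [CompleteSpace X]

theorem ContinuousLinearMap.apply_starProjection_orthogonal_ker (w : X) :
    T ((LinearMap.ker (T : X →ₗ[𝕜] Y))ᗮ.starProjection w) = T w := by
  have hker : T ((LinearMap.ker (T : X →ₗ[𝕜] Y)).starProjection w) = 0 :=
    LinearMap.mem_ker.mp (starProjection_apply_mem (LinearMap.ker (T : X →ₗ[𝕜] Y)) w)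
  conv_rhs => rw [← (LinearMap.ker (T : X →ₗ[𝕜] Y)).starProjection_add_starProjection_orthogonal w]
  rw [map_add, hker, zero_add]

theorem ContinuousLinearMap.exists_coe_eq_of_mem_orthogonal_ker {f : X → X} (A : X →L[𝕜] Y)
    (hf : ∀ x, f x ∈ (LinearMap.ker (T : X →ₗ[𝕜] Y))ᗮ ∧ T (f x) = A x) :
    ∃ Q : X →L[𝕜] X, ⇑Q = f := by
  let g : X →ₗ[𝕜] X :=
    { toFun := f
      map_add' := fun x y => T.eq_of_mem_orthogonal_ker (hf _).1 (add_mem (hf x).1 (hf y).1)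
        (by simp [(hf _).2])
      map_smul' := fun c x => T.eq_of_mem_orthogonal_ker (hf _).1 (smul_mem _ c (hf x).1)
        (by simp [(hf _).2]) }
  refine ⟨⟨g, g.continuous_of_seq_closed_graph fun u x y hu hfu => ?_⟩, rfl⟩
  have hy : y ∈ (LinearMap.ker (T : X →ₗ[𝕜] Y))ᗮ :=
    (isClosed_orthogonal _).mem_of_tendsto hfu (Eventually.of_forall fun n => (hf _).1)
  refine T.eq_of_mem_orthogonal_ker hy (hf x).1 ?_
  have hTy : Tendsto (fun n => T (f (u n))) atTop (𝓝 (T y)) := (T.continuous.tendsto y).comp hfu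
  have hAx : Tendsto (fun n => T (f (u n))) atTop (𝓝 (A x)) := by
    simp only [(hf _).2]
    exact (A.continuous.tendsto x).comp hu
  exact (tendsto_nhds_unique hTy hAx).trans (hf x).2.symm

variable {T} in
theorem range_eq_map_starProjection_orthogonal_ker (V : Submodule 𝕜 X)
    [(V.map (T : X →ₗ[𝕜] Y)).HasOrthogonalProjection] {f : X → X}
    (hf : ∀ x, f x ∈ (LinearMap.ker (T : X →ₗ[𝕜] Y))ᗮ ∧
      T (f x) = (V.map (T : X →ₗ[𝕜] Y)).starProjection (T x)) :
    Set.range f = V.map ((LinearMap.ker (T : X →ₗ[𝕜] Y))ᗮ.starProjection : X →ₗ[𝕜] X) := by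
  ext z
  constructor
  · rintro ⟨x, rfl⟩
    obtain ⟨w, hw, hTw⟩ := mem_map.mp ((V.map (T : X →ₗ[𝕜] Y)).starProjection_apply_mem (T x))
    refine mem_map.mpr
      ⟨w, hw, T.eq_of_mem_orthogonal_ker (starProjection_apply_mem _ _) (hf x).1 ?_⟩
    rw [coe_coe, T.apply_starProjection_orthogonal_ker, (hf x).2, ← hTw, coe_coe]
  · rintro ⟨w, hw, rfl⟩
    refine ⟨w, T.eq_of_mem_orthogonal_ker (hf w).1 (starProjection_apply_mem _ _) ?_⟩
    rw [(hf w).2, coe_coe, T.apply_starProjection_orthogonal_ker]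
    exact starProjection_eq_self_iff.mpr (mem_map_of_mem hw)

variable [CompleteSpace Y]

theorem ContinuousLinearMap.mem_orthogonal_map_adjoint_comp_self_iff (V : Submodule 𝕜 X)
    {x : X} :
    x ∈ (V.map ((adjoint T ∘L T : X →L[𝕜] X) : X →ₗ[𝕜] X))ᗮ ↔
      T x ∈ (V.map (T : X →ₗ[𝕜] Y))ᗮ := by
  simp only [mem_orthogonal, Submodule.mem_map, forall_exists_index, and_imp,
    forall_apply_eq_imp_iff₂, coe_coe, comp_apply, adjoint_inner_left]

theorem ContinuousLinearMap.orthogonal_ker_eq_closure_range_adjoint_comp_self :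
    ((LinearMap.ker (T : X →ₗ[𝕜] Y))ᗮ : Set X) = closure (Set.range (adjoint T ∘L T)) := by
  have := (adjoint T ∘L T).orthogonal_ker
  rw [ker_adjoint_comp_self, adjoint_comp, adjoint_adjoint] at this
  rw [this, topologicalClosure_coe, LinearMap.coe_range, coe_coe]

end MinimalNormSolution

section ProjectionApproximation

variable {𝕜 X : Type*} [RCLike 𝕜] [NormedAddCommGroup X] [InnerProductSpace 𝕜 X]
  {Xn : ℕ → Submodule 𝕜 X} [∀ n, (Xn n).HasOrthogonalProjection]

theorem tendsto_starProjection_map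
    (hproj : ∀ x, Tendsto (fun n => (Xn n).starProjection x) atTop (𝓝 x))
    {L : Submodule 𝕜 X} [L.HasOrthogonalProjection] (S : X →L[𝕜] X)
    [∀ n, ((Xn n).map (S : X →ₗ[𝕜] X)).HasOrthogonalProjection]
    (hSL : ∀ x, S x ∈ L) (hLS : (L : Set X) ⊆ closure (Set.range S)) (x : X) :
    Tendsto (fun n => ((Xn n).map (S : X →ₗ[𝕜] X)).starProjection x) atTop
      (𝓝 (L.starProjection x)) := by
  refine tendsto_starProjection_of_le_of_subset_closure (fun n => ?_) hLS (fun y hy => ?_) x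
  · rintro _ ⟨w, -, rfl⟩
    exact hSL w
  · obtain ⟨w, rfl⟩ := hy
    exact ⟨fun n => S ((Xn n).starProjection w),
      fun n => mem_map_of_mem (starProjection_apply_mem _ _),
      (S.continuous.tendsto w).comp (hproj w)⟩

end ProjectionApproximation

variable {X Y : Type*} [NormedAddCommGroup X] [InnerProductSpace ℝ X] [CompleteSpace X]
  [NormedAddCommGroup Y] [InnerProductSpace ℝ Y] [CompleteSpace Y]

theorem stmt15_general
    (T : X →L[ℝ] Y) (Xn : ℕ → Submodule ℝ X)
    (hfin : ∀ n, FiniteDimensional ℝ (Xn n))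
    (hproj : ∀ x : X, Tendsto (fun n => orthProj (Xn n) x) atTop (𝓝 x))
    (Qn : ℕ → X → X)
    (hQn : ∀ n (x : X), Qn n x ∈ (LinearMap.ker (T : X →ₗ[ℝ] Y))ᗮ ∧
      T (Qn n x) = orthProj ((Xn n).map (T : X →ₗ[ℝ] Y)) (T x)) :
    (∀ n, ∃ Q : X →L[ℝ] X, (⇑Q = Qn n) ∧ Q.comp Q = Q) ∧
    (∀ n (x : X), Qn n x = 0 ↔
      x ∈ (((Xn n).map (((ContinuousLinearMap.adjoint T).comp T : X →L[ℝ] X) : X →ₗ[ℝ] X))ᗮ : Submodule ℝ X)) ∧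
    (∀ n, Set.range (Qn n)
      = (((Xn n).map (orthProj ((LinearMap.ker (T : X →ₗ[ℝ] Y))ᗮ) : X →ₗ[ℝ] X) : Submodule ℝ X) : Set X)) ∧
    (∀ x : X, Tendsto
      (fun n => orthProj (((Xn n).map (((ContinuousLinearMap.adjoint T).comp T : X →L[ℝ] X) : X →ₗ[ℝ] X))ᗮ) x) atTop
      (𝓝 (orthProj (LinearMap.ker (T : X →ₗ[ℝ] Y)) x))) ∧
    (∀ x : X, Tendsto
      (fun n => orthProj ((Xn n).map (orthProj ((LinearMap.ker (T : X →ₗ[ℝ] Y))ᗮ) : X →ₗ[ℝ] X)) x) atTop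
      (𝓝 (orthProj ((LinearMap.ker (T : X →ₗ[ℝ] Y))ᗮ) x))) := by
  simp only [orthProj_eq_starProjection] at hproj hQn ⊢
  have hrange := T.orthogonal_ker_eq_closure_range_adjoint_comp_self
  refine ⟨fun n => ?_, fun n x => ?_, fun n => range_eq_map_starProjection_orthogonal_ker _ (hQn n),
    fun x => ?_, tendsto_starProjection_map hproj _ (starProjection_apply_mem _)
      fun y hy => subset_closure ⟨y, starProjection_eq_self_iff.mpr hy⟩⟩
  · obtain ⟨Q, hQ⟩ := T.exists_coe_eq_of_mem_orthogonal_ker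
      (((Xn n).map (T : X →ₗ[ℝ] Y)).starProjection ∘L T) (hQn n)
    exact ⟨Q, hQ, ContinuousLinearMap.ext fun x => by
      simp only [comp_apply, hQ, apply_apply_eq_of_eq_starProjection_apply (hQn n)]⟩
  · rw [apply_eq_zero_iff_of_eq_starProjection_apply (hQn n),
      T.mem_orthogonal_map_adjoint_comp_self_iff]
  · exact tendsto_starProjection_orthogonal <| tendsto_starProjection_map hproj _
      (fun w => hrange.ge (subset_closure ⟨w, rfl⟩)) hrange.le x

/-- The oblique projections `Qₙ = T†P_{T(Xₙ)}T`: bounded linear idempotents with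
`N(Qₙ) = (T*T(Xₙ))ᗮ`, `R(Qₙ) = P_{N(T)ᗮ}(Xₙ)`, and
`s-lim P_{N(Qₙ)} = P_{N(T)}`, `s-lim P_{R(Qₙ)} = P_{N(T)ᗮ}`. -/
theorem stmt15
    (T : X →L[ℝ] Y) (Xn : ℕ → Submodule ℝ X)
    (hfin : ∀ n, FiniteDimensional ℝ (Xn n))
    (hinf : ¬ FiniteDimensional ℝ X)
    (hproj : ∀ x : X, Tendsto (fun n => orthProj (Xn n) x) atTop (𝓝 x))
    (Tn : ℕ → X →L[ℝ] Y) (hTn : ∀ n, Tn n = T.comp (orthProj (Xn n)))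
    (Qn : ℕ → X → X)
    (hQn : ∀ n (x : X), Qn n x ∈ (LinearMap.ker (T : X →ₗ[ℝ] Y))ᗮ ∧
      T (Qn n x) = orthProj ((Xn n).map (T : X →ₗ[ℝ] Y)) (T x)) :
    (∀ n, ∃ Q : X →L[ℝ] X, (⇑Q = Qn n) ∧ Q.comp Q = Q) ∧
    (∀ n (x : X), Qn n x = 0 ↔
      x ∈ (((Xn n).map (((ContinuousLinearMap.adjoint T).comp T : X →L[ℝ] X) : X →ₗ[ℝ] X))ᗮ : Submodule ℝ X)) ∧
    (∀ n, Set.range (Qn n)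
      = (((Xn n).map (orthProj ((LinearMap.ker (T : X →ₗ[ℝ] Y))ᗮ) : X →ₗ[ℝ] X) : Submodule ℝ X) : Set X)) ∧
    (∀ x : X, Tendsto
      (fun n => orthProj (((Xn n).map (((ContinuousLinearMap.adjoint T).comp T : X →L[ℝ] X) : X →ₗ[ℝ] X))ᗮ) x) atTop
      (𝓝 (orthProj (LinearMap.ker (T : X →ₗ[ℝ] Y)) x))) ∧
    (∀ x : X, Tendsto
      (fun n => orthProj ((Xn n).map (orthProj ((LinearMap.ker (T : X →ₗ[ℝ] Y))ᗮ) : X →ₗ[ℝ] X)) x) atTop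
      (𝓝 (orthProj ((LinearMap.ker (T : X →ₗ[ℝ] Y))ᗮ) x))) :=
  stmt15_general T Xn hfin hproj Qn hQn
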